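/- Let $V_k = \operatorname{ess\,sup}_{\tau \ge k} \mathbb{E}[g_\tau \mid \mathcal{F}_k]$ be the Snell envelope of an adapted integrable reward process $(g_k)_{k=0}^N$, with Doob decomposition $V_k = V_0 + M_k - A_k$ where $M$ is a martingale and $A$ is nondecreasing predictable with $M_0 = A_0 = 0$. Then $\mathbb{E}[\max_{0\le k\le N}(g_k - M_k)] = V_0 + \mathbb{E}[\max_{0\le k\le N}(g_k - V_k - A_k)]$ and since $g_k \le V_k$ and $A_k \ge 0$ pointwise, $\mathbb{E}[\max_{0\le k\le N}(g_k - M_k)] \le V_0$; combined with weak duality, equality holds: $V_0 = \mathbb{E}[\max_{0\le k\le N}(g_k - M_k)]$ for the Doob martingale $M$. -/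

import Mathlib

/-!
Writing `V_k = V₀ + M_k - A_k` turns `g_k - M_k` into `V₀ + (g_k - V_k - A_k)`, so the dual
objective of the Doob martingale is `V₀` plus the expected maximum of `g - V - A`. That maximum is
nonpositive because the Snell envelope dominates `g` and `A ≥ 0`, which gives `≤ V₀`; weak duality
supplies the reverse inequality.
-/

open MeasureTheory

theorem iSup_sub_eq_add_iSup_sub_sub {ι : Type*} [Finite ι] [Nonempty ι] (g V M A : ι → ℝ)
    (c : ℝ) (hV : ∀ k, V k = c + M k - A k) :
    ⨆ k, (g k - M k) = c + ⨆ k, (g k - V k - A k) := by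
  have hshift : ∀ k, g k - M k = c + (g k - V k - A k) := fun k => by rw [hV k]; ring
  rw [iSup_congr hshift, add_ciSup (Set.finite_range _).bddAbove]

theorem iSup_sub_sub_nonpos {ι : Type*} [Nonempty ι] (g V A : ι → ℝ) (hgV : ∀ k, g k ≤ V k)
    (hA : ∀ k, 0 ≤ A k) :
    ⨆ k, (g k - V k - A k) ≤ 0 :=
  ciSup_le fun k => by linarith [hgV k, hA k]

theorem stmt2_general {Ω : Type*} {m : MeasurableSpace Ω} {μ : Measure Ω} [IsProbabilityMeasure μ]
    (N : ℕ) (g V M A : ℕ → Ω → ℝ) (V0 : ℝ)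
    (hDoob : ∀ k ≤ N, V k =ᵐ[μ] fun ω => V0 + M k ω - A k ω)
    (hdom : ∀ k ≤ N, g k ≤ᵐ[μ] V k)
    (hA_nonneg : ∀ k ≤ N, 0 ≤ᵐ[μ] A k)
    (hint2 : Integrable (fun ω => ⨆ k : Fin (N + 1), (g k ω - V k ω - A k ω)) μ)
    (hweak : V0 ≤ ∫ ω, ⨆ k : Fin (N + 1), (g k ω - M k ω) ∂μ) :
    (∫ ω, ⨆ k : Fin (N + 1), (g k ω - M k ω) ∂μ
        = V0 + ∫ ω, ⨆ k : Fin (N + 1), (g k ω - V k ω - A k ω) ∂μ)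
    ∧ (∫ ω, ⨆ k : Fin (N + 1), (g k ω - M k ω) ∂μ ≤ V0)
    ∧ V0 = ∫ ω, ⨆ k : Fin (N + 1), (g k ω - M k ω) ∂μ := by
  have hae : ∀ᵐ ω ∂μ, ∀ k : Fin (N + 1),
      V k ω = V0 + M k ω - A k ω ∧ g k ω ≤ V k ω ∧ 0 ≤ A k ω := by
    refine ae_all_iff.mpr fun k => ?_
    have hk : (k : ℕ) ≤ N := Nat.lt_succ_iff.mp k.isLt
    filter_upwards [hDoob k hk, hdom k hk, hA_nonneg k hk] with ω hV hgV hA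
    exact ⟨hV, hgV, hA⟩
  have hdecomp : ∫ ω, ⨆ k : Fin (N + 1), (g k ω - M k ω) ∂μ
      = V0 + ∫ ω, ⨆ k : Fin (N + 1), (g k ω - V k ω - A k ω) ∂μ := by
    rw [integral_congr_ae (hae.mono fun ω h => iSup_sub_eq_add_iSup_sub_sub
        (fun k : Fin (N + 1) => g k ω) _ _ _ V0 fun k => (h k).1),
      integral_add (integrable_const V0) hint2, integral_const, probReal_univ, one_smul]
  have hgap : ∫ ω, ⨆ k : Fin (N + 1), (g k ω - V k ω - A k ω) ∂μ ≤ 0 :=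
    integral_nonpos_of_ae <| hae.mono fun ω h =>
      iSup_sub_sub_nonpos (fun k : Fin (N + 1) => g k ω) _ _ (fun k => (h k).2.1)
        fun k => (h k).2.2
  have hle : ∫ ω, ⨆ k : Fin (N + 1), (g k ω - M k ω) ∂μ ≤ V0 := by linarith
  exact ⟨hdecomp, hle, le_antisymm hweak hle⟩

theorem stmt2 {Ω : Type*} {m : MeasurableSpace Ω} {μ : Measure Ω} [IsProbabilityMeasure μ]
    (N : ℕ) (ℱ : Filtration ℕ m) (g V M A : ℕ → Ω → ℝ) (V0 : ℝ)
    (hg_adapted : Adapted ℱ g) (hg_int : ∀ k, Integrable (g k) μ)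
    (hg_nonneg : ∀ k ω, 0 ≤ g k ω)
    (hV_adapted : Adapted ℱ V) (hV_int : ∀ k, Integrable (V k) μ)
    (hVN : V N =ᵐ[μ] g N)
    (hVrec : ∀ k < N, V k =ᵐ[μ] fun ω => max (g k ω) ((μ[V (k + 1)|ℱ k]) ω))
    (hM : Martingale M ℱ μ) (hM0 : M 0 =ᵐ[μ] 0)
    (hA0 : A 0 =ᵐ[μ] 0) (hA_pred : ∀ k < N, StronglyMeasurable[ℱ k] (A (k + 1)))
    (hA_int : ∀ k, Integrable (A k) μ)
    (hA_mono : ∀ k < N, A k ≤ᵐ[μ] A (k + 1))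
    (hDoob : ∀ k ≤ N, V k =ᵐ[μ] fun ω => V0 + M k ω - A k ω)
    (hdom : ∀ k ≤ N, g k ≤ᵐ[μ] V k)
    (hA_nonneg : ∀ k ≤ N, 0 ≤ᵐ[μ] A k)
    (hint1 : Integrable (fun ω => ⨆ k : Fin (N + 1), (g k ω - M k ω)) μ)
    (hint2 : Integrable (fun ω => ⨆ k : Fin (N + 1), (g k ω - V k ω - A k ω)) μ)
    (hweak : V0 ≤ ∫ ω, ⨆ k : Fin (N + 1), (g k ω - M k ω) ∂μ) :
    (∫ ω, ⨆ k : Fin (N + 1), (g k ω - M k ω) ∂μ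
        = V0 + ∫ ω, ⨆ k : Fin (N + 1), (g k ω - V k ω - A k ω) ∂μ)
    ∧ (∫ ω, ⨆ k : Fin (N + 1), (g k ω - M k ω) ∂μ ≤ V0)
    ∧ V0 = ∫ ω, ⨆ k : Fin (N + 1), (g k ω - M k ω) ∂μ :=
  stmt2_general (m := m) N g V M A V0 hDoob hdom hA_nonneg hint2 hweak
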